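/- arXiv:1408.3205 — 3 statements merged into one kernel-verified Lean document; each statement's English description precedes it below -/
import Mathlib

section
/- Let t, k, d be positive integers and 2 ≤ v_1 ≤ v_2 ≤ ⋯ ≤ v_k with t < k and d < v_1, and set N = (d+1)·v_{k−t+1}·v_{k−t+2}⋯v_k. An N×k array A of type (v_1,…,v_k) is an optimum (d,t)-DTA(N; k, (v_1,…,v_k)) meeting the lower bound N = (d+1)·∏_{i=k−t+1}^k v_i if and only if A is a d-extendible MCA_{d+1}(N; t, k, (v_1,…,v_k)) of optimum size N = (d+1)·∏_{i=k−t+1}^k v_i. -/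
/-- An array `A` (rows indexed by `R`, columns by `J`) is of type `v` if every
entry in column `j` lies in `Z_{v j} = {0, 1, …, v j - 1}`. -/
def IsArray {R J : Type*} (v : J → ℕ) (A : R → J → ℕ) : Prop :=
  ∀ r j, A r j < v j

/-- An `s`-way interaction: a set of `s` pairs `(j, σ)` with pairwise distinct
column indices `j` and value `σ ∈ Z_{v j}`. -/
def IsInteraction {J : Type*} [DecidableEq J] (v : J → ℕ) (s : ℕ)
    (T : Finset (J × ℕ)) : Prop :=
  T.card = s ∧ (T.image Prod.fst).card = s ∧ ∀ p ∈ T, p.2 < v p.1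

/-- `rho A T`: the set of rows of `A` in which the interaction `T` is covered. -/
def rho {R J : Type*} [Fintype R] (A : R → J → ℕ) (T : Finset (J × ℕ)) :
    Finset R :=
  Finset.univ.filter fun r => ∀ p ∈ T, A r p.1 = p.2

/-- `rhoSet A 𝒯 = ⋃_{T ∈ 𝒯} rho A T`. -/
def rhoSet {R J : Type*} [Fintype R] [DecidableEq R] (A : R → J → ℕ)
    (Ts : Finset (Finset (J × ℕ))) : Finset R :=
  Ts.sup (rho A)

/-- A `(d,t)`-detecting array of type `v`: for every `t`-way interaction `T` and
every set `𝒯` of exactly `d` `t`-way interactions,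
`ρ(A,T) ⊆ ρ(A,𝒯) ↔ T ∈ 𝒯`. -/
def IsDTA {R J : Type*} [Fintype R] [DecidableEq R] [DecidableEq J] (v : J → ℕ) (d t : ℕ)
    (A : R → J → ℕ) : Prop :=
  IsArray v A ∧
    ∀ T : Finset (J × ℕ), IsInteraction v t T →
      ∀ Ts : Finset (Finset (J × ℕ)), Ts.card = d →
        (∀ T' ∈ Ts, IsInteraction v t T') →
          (rho A T ⊆ rhoSet A Ts ↔ T ∈ Ts)

/-- A mixed covering array `MCA_λ(N; t, k, v)`: an array of type `v` such that
`|ρ(A,T)| ≥ λ` for every `t`-way interaction `T`. -/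
def IsMCA {R J : Type*} [Fintype R] [DecidableEq J] (v : J → ℕ) (lam t : ℕ)
    (A : R → J → ℕ) : Prop :=
  IsArray v A ∧ ∀ T : Finset (J × ℕ), IsInteraction v t T → lam ≤ (rho A T).card

/-- Super-simple of strength `t`: every `(t+1)`-way interaction is covered by at
most one row. -/
def IsSuperSimple {R J : Type*} [Fintype R] [DecidableEq J] (v : J → ℕ) (t : ℕ)
    (A : R → J → ℕ) : Prop :=
  ∀ T : Finset (J × ℕ), IsInteraction v (t + 1) T → (rho A T).card ≤ 1

/-- An orthogonal array `OA_λ(t, k, v)`: all entries in `Z_v` and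
`|ρ(A,T)| = λ` for every `t`-way interaction `T`. (The size requirement
`N = λ·v^t` is imposed on the row-index type in the statements.) -/
def IsOA {R J : Type*} [Fintype R] [DecidableEq J] (vlev lam t : ℕ)
    (A : R → J → ℕ) : Prop :=
  IsArray (fun _ : J => vlev) A ∧
    ∀ T : Finset (J × ℕ), IsInteraction (fun _ : J => vlev) t T →
      (rho A T).card = lam

/-- `Te` is an extension of the interaction `T`: it is obtained from `T` by
adjoining one pair `(j, σ)` with `σ ∈ Z_{v j}` whose column index `j` occurs in
no pair of `T`. -/
def IsExtension {J : Type*} [DecidableEq J] (v : J → ℕ)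
    (T Te : Finset (J × ℕ)) : Prop :=
  ∃ p : J × ℕ, p.2 < v p.1 ∧ (∀ q ∈ T, q.1 ≠ p.1) ∧ Te = insert p T

/-- `A` is `d`-extendible (with respect to strength `t`): for every `t`-way
interaction `T` and every list of `d` extensions `T_1, …, T_d` of `T`
(repetitions allowed), `ρ(A,T) \ (ρ(A,T_1) ∪ ⋯ ∪ ρ(A,T_d))` is nonempty. -/
def IsExtendible {R J : Type*} [Fintype R] [DecidableEq J] (v : J → ℕ)
    (d t : ℕ) (A : R → J → ℕ) : Prop :=
  ∀ T : Finset (J × ℕ), IsInteraction v t T →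
    ∀ Te : Fin d → Finset (J × ℕ), (∀ i, IsExtension v T (Te i)) →
      ∃ r ∈ rho A T, ∀ i, r ∉ rho A (Te i)

section Helpers
variable {R J : Type*}

lemma mem_rho_iff [Fintype R] {A : R → J → ℕ} {T : Finset (J × ℕ)} {r : R} :
    r ∈ rho A T ↔ ∀ p ∈ T, A r p.1 = p.2 := by
  simp [rho]

lemma rho_anti [Fintype R] (A : R → J → ℕ) {T T' : Finset (J × ℕ)} (h : T ⊆ T') :
    rho A T' ⊆ rho A T := fun r hr =>
  mem_rho_iff.2 fun p hp => mem_rho_iff.1 hr p (h hp)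

variable [DecidableEq J] {v : J → ℕ} {t : ℕ}

lemma interaction_injOn {T : Finset (J × ℕ)} (h : IsInteraction v t T) :
    Set.InjOn Prod.fst (T : Set (J × ℕ)) :=
  Finset.card_image_iff.mp (h.2.1.trans h.1.symm)

lemma interaction_swap {T : Finset (J × ℕ)} (h : IsInteraction v t T)
    {p0 : J × ℕ} (hp0 : p0 ∈ T) {q : J × ℕ} (hq2 : q.2 < v q.1)
    (hj : ∀ p ∈ T, p.1 ≠ q.1) :
    IsInteraction v t (insert q (T.erase p0)) := by
  have ht1 : 1 ≤ t := h.1 ▸ Finset.card_pos.mpr ⟨p0, hp0⟩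
  have hne : q ∉ T.erase p0 := fun hm => hj q (Finset.erase_subset _ _ hm) rfl
  have hcarde : (T.erase p0).card = t - 1 := by
    rw [Finset.card_erase_of_mem hp0, h.1]
  have hinj : Set.InjOn Prod.fst ((T.erase p0) : Set (J × ℕ)) :=
    (interaction_injOn h).mono (by exact_mod_cast Finset.erase_subset _ _)
  refine ⟨?_, ?_, ?_⟩
  · rw [Finset.card_insert_of_notMem hne, hcarde]; omega
  · rw [Finset.image_insert]
    have hq1 : q.1 ∉ (T.erase p0).image Prod.fst := by
      intro hm
      obtain ⟨p, hp, hpq⟩ := Finset.mem_image.mp hm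
      exact hj p (Finset.erase_subset _ _ hp) hpq
    rw [Finset.card_insert_of_notMem hq1, Finset.card_image_iff.mpr hinj, hcarde]
    omega
  · intro p hp
    rcases Finset.mem_insert.mp hp with h' | h'
    · exact h' ▸ hq2
    · exact h.2.2 p (Finset.erase_subset _ _ h')

lemma swap_inj {T : Finset (J × ℕ)} {p0 : J × ℕ} {j : J}
    (hj : ∀ p ∈ T, p.1 ≠ j) {σ σ' : ℕ}
    (h : insert ((j, σ)) (T.erase p0) = insert ((j, σ')) (T.erase p0)) : σ = σ' := by
  have : (j, σ) ∈ insert ((j, σ')) (T.erase p0) := h ▸ Finset.mem_insert_self _ _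
  rcases Finset.mem_insert.mp this with h' | h'
  · exact (Prod.ext_iff.mp h').2
  · exact absurd rfl (hj _ (Finset.erase_subset _ _ h'))

lemma swap_ne {T : Finset (J × ℕ)} {q : J × ℕ} (hj : ∀ p ∈ T, p.1 ≠ q.1)
    (S : Finset (J × ℕ)) : insert q S ≠ T := fun h =>
  hj q (h ▸ Finset.mem_insert_self q S) rfl

lemma exists_fresh {k : ℕ} {v : Fin k → ℕ} {T : Finset (Fin k × ℕ)}
    (h : IsInteraction v t T) (htk : t < k) : ∃ j : Fin k, ∀ p ∈ T, p.1 ≠ j := by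
  by_contra hc
  push_neg at hc
  have hsub : (Finset.univ : Finset (Fin k)) ⊆ T.image Prod.fst := by
    intro j _
    obtain ⟨p, hp, hpj⟩ := hc j
    exact Finset.mem_image.mpr ⟨p, hp, hpj⟩
  have := Finset.card_le_card hsub
  rw [Finset.card_univ, Fintype.card_fin, h.2.1] at this
  omega

end Helpers

/-- Theorem: with `N = (d+1)·∏_{i=k-t+1}^k v_i`, `A` is an optimum
`(d,t)`-DTA meeting the lower bound iff `A` is a `d`-extendible `MCA_{d+1}` of
optimum size `N`. -/
theorem stmt_5 {t k d N : ℕ} (ht : 0 < t) (hk : 0 < k) (hd : 0 < d)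
    (v : Fin k → ℕ) (hmono : Monotone v) (hv2 : 2 ≤ v ⟨0, hk⟩)
    (htk : t < k) (hdv : d < v ⟨0, hk⟩)
    (hN : N = (d + 1) * ∏ i ∈ Finset.univ.filter (fun i : Fin k => k - t ≤ (i : ℕ)), v i)
    (A : Fin N → Fin k → ℕ) (hA : IsArray v A) :
    IsDTA v d t A ↔ (IsExtendible v d t A ∧ IsMCA v (d + 1) t A) := by
  have hval : ∀ j : Fin k, d + 1 ≤ v j := fun j =>
    le_trans (Nat.succ_le_of_lt hdv) (hmono (Fin.le_def.mpr (Nat.zero_le _)))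
  constructor
  · rintro ⟨-, hdet⟩
    constructor
    · -- extendible
      intro T hT Te hTe
      by_contra hcon
      push_neg at hcon
      choose pe hpe1 hpe2 hpe3 using hTe
      obtain ⟨p0, hp0⟩ : T.Nonempty := Finset.card_pos.mp (hT.1 ▸ ht)
      set i0 : Fin d := ⟨0, hd⟩ with hi0
      set j1 : Fin k := (pe i0).1 with hj1
      have hj1f : ∀ p ∈ T, p.1 ≠ j1 := hpe2 i0
      set base : Finset (Finset (Fin k × ℕ)) :=
        Finset.univ.image (fun i : Fin d => insert (pe i) (T.erase p0)) with hbasedef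
      set pool : Finset (Finset (Fin k × ℕ)) :=
        (Finset.range (v j1)).image (fun σ => insert ((j1, σ)) (T.erase p0)) with hpooldef
      have hpoolcard : pool.card = v j1 := by
        rw [hpooldef, Finset.card_image_of_injOn, Finset.card_range]
        exact fun σ _ σ' _ h => swap_inj hj1f h
      have hbasecard : base.card ≤ d :=
        le_trans Finset.card_image_le (by simp)
      obtain ⟨Ts, hsub1, hsub2, hcard⟩ :=
        Finset.exists_subsuperset_card_eq
          (Finset.subset_union_left : base ⊆ base ∪ pool) hbasecard
          (le_trans (le_trans (Nat.le_succ d) (hval j1))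
            (hpoolcard ▸ Finset.card_le_card Finset.subset_union_right))
      have hmem : ∀ T' ∈ Ts, ∃ q : Fin k × ℕ, q.2 < v q.1 ∧ (∀ p ∈ T, p.1 ≠ q.1) ∧
          T' = insert q (T.erase p0) := by
        intro T' hT'
        rcases Finset.mem_union.mp (hsub2 hT') with h' | h'
        · obtain ⟨i, -, hi⟩ := Finset.mem_image.mp h'
          exact ⟨pe i, hpe1 i, hpe2 i, hi.symm⟩
        · obtain ⟨σ, hσ, hi⟩ := Finset.mem_image.mp h'
          exact ⟨(j1, σ), Finset.mem_range.mp hσ, hj1f, hi.symm⟩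
      have hints : ∀ T' ∈ Ts, IsInteraction v t T' := by
        intro T' hT'
        obtain ⟨q, hq1, hq2, hq3⟩ := hmem T' hT'
        exact hq3 ▸ interaction_swap hT hp0 hq1 hq2
      have hsubset : rho A T ⊆ rhoSet A Ts := by
        intro r hr
        obtain ⟨i, hi⟩ := hcon r hr
        have h1 : insert (pe i) (T.erase p0) ⊆ Te i := by
          rw [hpe3 i]; exact Finset.insert_subset_insert _ (Finset.erase_subset _ _)
        exact Finset.mem_sup.mpr ⟨insert (pe i) (T.erase p0),
          hsub1 (Finset.mem_image.mpr ⟨i, Finset.mem_univ i, rfl⟩),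
          rho_anti A h1 hi⟩
      have hTTs := (hdet T hT Ts hcard hints).mp hsubset
      obtain ⟨q, -, hq2, hq3⟩ := hmem T hTTs
      exact swap_ne hq2 _ hq3.symm
    · -- MCA part
      refine ⟨hA, fun T hT => ?_⟩
      by_contra hcon
      push_neg at hcon
      obtain ⟨j, hj⟩ := exists_fresh hT htk
      obtain ⟨p0, hp0⟩ : T.Nonempty := Finset.card_pos.mp (hT.1 ▸ ht)
      set used : Finset ℕ := (rho A T).image (fun r => A r j) with husedef
      have husub : used ⊆ Finset.range (v j) := by
        intro σ hσ
        obtain ⟨r, -, hr⟩ := Finset.mem_image.mp hσ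
        exact Finset.mem_range.mpr (hr ▸ hA r j)
      have hucard : used.card ≤ d :=
        le_trans Finset.card_image_le (by omega)
      obtain ⟨S, hS1, hS2, hS3⟩ := Finset.exists_subsuperset_card_eq husub hucard
        (by rw [Finset.card_range]; exact le_trans (Nat.le_succ d) (hval j))
      set Ts : Finset (Finset (Fin k × ℕ)) :=
        S.image (fun σ => insert ((j, σ)) (T.erase p0)) with hTsdef
      have hTscard : Ts.card = d := by
        rw [hTsdef, Finset.card_image_of_injOn, hS3]
        exact fun σ _ σ' _ h => swap_inj hj h
      have hints : ∀ T' ∈ Ts, IsInteraction v t T' := by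
        intro T' hT'
        obtain ⟨σ, hσ, hi⟩ := Finset.mem_image.mp hT'
        exact hi ▸ interaction_swap hT hp0 (Finset.mem_range.mp (hS2 hσ)) hj
      have hsubset : rho A T ⊆ rhoSet A Ts := by
        intro r hr
        refine Finset.mem_sup.mpr ⟨insert ((j, A r j)) (T.erase p0),
          Finset.mem_image.mpr ⟨A r j, hS1 (Finset.mem_image.mpr ⟨r, hr, rfl⟩), rfl⟩, ?_⟩
        refine mem_rho_iff.mpr fun p hp => ?_
        rcases Finset.mem_insert.mp hp with h' | h'
        · rw [h']
        · exact mem_rho_iff.mp hr p (Finset.erase_subset _ _ h')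
      have hTTs := (hdet T hT Ts hTscard hints).mp hsubset
      obtain ⟨σ, -, hi⟩ := Finset.mem_image.mp hTTs
      exact swap_ne hj _ hi
  · rintro ⟨hext, -⟩
    refine ⟨hA, fun T hT Ts hTscard hTs =>
      ⟨fun hsub => ?_, fun hmem r hr => Finset.mem_sup.mpr ⟨T, hmem, hr⟩⟩⟩
    by_contra hTmem
    obtain ⟨jd, hjd⟩ := exists_fresh hT htk
    have hE : ∀ T' ∈ Ts, ∃ E, IsExtension v T E ∧
        ∀ r, r ∈ rho A T → r ∈ rho A T' → r ∈ rho A E := by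
      intro T' hT'
      have hint' := hTs T' hT'
      by_cases hc : ∃ q ∈ T', ∀ p ∈ T, p.1 ≠ q.1
      · obtain ⟨q, hqT', hq⟩ := hc
        refine ⟨insert q T, ⟨q, hint'.2.2 q hqT', hq, rfl⟩, fun r hrT hrT' => ?_⟩
        refine mem_rho_iff.mpr fun p hp => ?_
        rcases Finset.mem_insert.mp hp with h' | h'
        · exact h' ▸ mem_rho_iff.mp hrT' q hqT'
        · exact mem_rho_iff.mp hrT p h'
      · push_neg at hc
        have hne : T' ≠ T := fun h => hTmem (h ▸ hT')
        have hnss : ¬ T' ⊆ T := fun hss =>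
          hne (Finset.eq_of_subset_of_card_le hss (le_of_eq (hT.1.trans hint'.1.symm)))
        obtain ⟨q, hqT', hqT⟩ := Finset.not_subset.mp hnss
        obtain ⟨p, hpT, hpq⟩ := hc q hqT'
        refine ⟨insert ((jd, 0)) T,
          ⟨(jd, 0), lt_of_lt_of_le (Nat.succ_pos d) (hval jd), fun q' hq' => hjd q' hq', rfl⟩,
          fun r hrT hrT' => absurd (Prod.ext_iff.mpr ⟨hpq, ?_⟩ : p = q)
            fun h => hqT (h ▸ hpT)⟩
        have h1 := mem_rho_iff.mp hrT p hpT
        have h2 := mem_rho_iff.mp hrT' q hqT'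
        rw [← h1, ← h2, hpq]
    choose E hE1 hE2 using hE
    have e : Fin d ≃ {x // x ∈ Ts} := (finCongr hTscard.symm).trans Ts.equivFin.symm
    obtain ⟨r, hrT, hr⟩ := hext T hT (fun i => E (e i) (e i).2) (fun i => hE1 _ _)
    obtain ⟨T', hT'Ts, hrT'⟩ := Finset.mem_sup.mp (hsub hrT)
    have hmem : r ∈ rho A (E ((e (e.symm ⟨T', hT'Ts⟩)) : Finset (Fin k × ℕ))
        (e (e.symm ⟨T', hT'Ts⟩)).2) := by
      rw [e.apply_symm_apply]
      exact hE2 T' hT'Ts r hrT hrT'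
    exact hr (e.symm ⟨T', hT'Ts⟩) hmem
end

section
/- Let t, k, d be positive integers and 2 ≤ v_1 ≤ v_2 ≤ ⋯ ≤ v_k with t < k and d < v_1, and set N = (d+1)·v_{k−t+1}·v_{k−t+2}⋯v_k. If there exists a super-simple MCA_{d+1}(N; t, k, (v_1,…,v_k)) of optimum size N, then there exists an optimum (d,t)-DTA(N; k, (v_1,…,v_k)) meeting the lower bound N = (d+1)·∏_{i=k−t+1}^k v_i. -/
lemma inter_card_le_one {R J : Type*} [Fintype R] [DecidableEq R] [DecidableEq J]
    {v : J → ℕ} {t : ℕ} {A : R → J → ℕ} (hSS : IsSuperSimple v t A)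
    {T T' : Finset (J × ℕ)} (hT : IsInteraction v t T) (hT' : IsInteraction v t T')
    (hne : T' ≠ T) : (rho A T ∩ rho A T').card ≤ 1 := by
  have hsubTT : ¬ T' ⊆ T := fun h => hne (Finset.eq_of_subset_of_card_le h
    (by rw [hT.1, hT'.1]))
  obtain ⟨p, hpT', hpT⟩ := Finset.not_subset.mp hsubTT
  by_cases hcol : p.1 ∈ T.image Prod.fst
  · -- same column appears in T with a different value: intersection empty
    obtain ⟨q, hqT, hq1⟩ := Finset.mem_image.mp hcol
    have hq2 : q.2 ≠ p.2 := by
      intro h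
      exact hpT (by rwa [show p = q from Prod.ext hq1.symm h.symm])
    have : rho A T ∩ rho A T' = ∅ := by
      rw [Finset.eq_empty_iff_forall_notMem]
      intro r hr
      rw [Finset.mem_inter] at hr
      have h1 : A r q.1 = q.2 := by
        have := hr.1; rw [rho, Finset.mem_filter] at this; exact this.2 q hqT
      have h2 : A r p.1 = p.2 := by
        have := hr.2; rw [rho, Finset.mem_filter] at this; exact this.2 p hpT'
      rw [hq1] at h1
      exact hq2 (h1.symm.trans h2)
    rw [this]; simp
  · -- extend T by p to a (t+1)-way interaction
    have hint : IsInteraction v (t + 1) (insert p T) := by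
      refine ⟨?_, ?_, ?_⟩
      · rw [Finset.card_insert_of_notMem hpT, hT.1]
      · rw [Finset.image_insert, Finset.card_insert_of_notMem hcol,
          hT.2.1]
      · intro q hq
        rcases Finset.mem_insert.mp hq with h | h
        · rw [h]; exact hT'.2.2 p hpT'
        · exact hT.2.2 q h
    have hsub : rho A T ∩ rho A T' ⊆ rho A (insert p T) := by
      intro r hr
      rw [Finset.mem_inter] at hr
      have h1 := hr.1; have h2 := hr.2
      rw [rho, Finset.mem_filter] at h1 h2 ⊢
      refine ⟨h1.1, fun q hq => ?_⟩
      rcases Finset.mem_insert.mp hq with h | h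
      · rw [h]; exact h2.2 p hpT'
      · exact h1.2 q h
    exact le_trans (Finset.card_le_card hsub) (hSS _ hint)

/-- Theorem: if a super-simple `MCA_{d+1}` of optimum size
`N = (d+1)·∏_{i=k-t+1}^k v_i` exists, then an optimum `(d,t)`-DTA of size `N`
meeting the lower bound exists. -/
theorem stmt_9 {t k d N : ℕ} (ht : 0 < t) (hk : 0 < k) (hd : 0 < d)
    (v : Fin k → ℕ) (hmono : Monotone v) (hv2 : 2 ≤ v ⟨0, hk⟩)
    (htk : t < k) (hdv : d < v ⟨0, hk⟩)
    (hN : N = (d + 1) * ∏ i ∈ Finset.univ.filter (fun i : Fin k => k - t ≤ (i : ℕ)), v i)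
    (hex : ∃ A : Fin N → Fin k → ℕ, IsMCA v (d + 1) t A ∧ IsSuperSimple v t A) :
    ∃ B : Fin N → Fin k → ℕ, IsDTA v d t B := by
  obtain ⟨A, hMCA, hSS⟩ := hex
  refine ⟨A, hMCA.1, ?_⟩
  intro T hT Ts hTscard hTs
  constructor
  · intro hsub
    by_contra hTnot
    have hsub2 : rho A T ⊆ Ts.biUnion (fun T' => rho A T ∩ rho A T') := by
      intro r hr
      have hmem := hsub hr
      rw [rhoSet, Finset.sup_eq_biUnion, Finset.mem_biUnion] at hmem
      obtain ⟨T', hT', hr'⟩ := hmem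
      exact Finset.mem_biUnion.mpr ⟨T', hT', Finset.mem_inter.mpr ⟨hr, hr'⟩⟩
    have hbound : (rho A T).card ≤ d := by
      calc (rho A T).card ≤ (Ts.biUnion (fun T' => rho A T ∩ rho A T')).card :=
            Finset.card_le_card hsub2
        _ ≤ ∑ T' ∈ Ts, (rho A T ∩ rho A T').card := Finset.card_biUnion_le
        _ ≤ ∑ _T' ∈ Ts, 1 := by
            refine Finset.sum_le_sum fun T' hT' => ?_
            exact inter_card_le_one hSS hT (hTs T' hT')
              (fun h => hTnot (h ▸ hT'))
        _ = d := by rw [Finset.sum_const, smul_eq_mul, mul_one, hTscard]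
    have := hMCA.2 T hT
    omega
  · intro hTTs
    intro r hr
    exact Finset.mem_sup.mpr ⟨T, hTTs, hr⟩
end

section
/- Let q and k be integers with q ≥ 2 and k > 2. If there exists a (1,2)-DTA(2q^2; k, q), i.e., an optimum (1,2)-detecting array on k factors each with q levels whose size 2q^2 meets the lower bound, then k ≤ 2q. -/
section Aux

lemma mem_rho {R J : Type*} [Fintype R] {A : R → J → ℕ} {T : Finset (J × ℕ)} {r : R} :
    r ∈ rho A T ↔ ∀ p ∈ T, A r p.1 = p.2 := by
  simp [rho]

variable {q k : ℕ} {A : Fin (2 * q ^ 2) → Fin k → ℕ}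

lemma pair_interaction {j j' : Fin k} (hjj : j ≠ j') {σ σ' : ℕ} (hσ : σ < q) (hσ' : σ' < q) :
    IsInteraction (fun _ : Fin k => q) 2 ({(j, σ), (j', σ')} : Finset (Fin k × ℕ)) := by
  have hne : (j, σ) ∉ ({(j', σ')} : Finset (Fin k × ℕ)) := by
    simp [Prod.ext_iff]; intro h; exact absurd h hjj
  refine ⟨?_, ?_, ?_⟩
  · rw [Finset.card_insert_of_notMem hne, Finset.card_singleton]
  · have himg : ({(j, σ), (j', σ')} : Finset (Fin k × ℕ)).image Prod.fst = {j, j'} := by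
      simp
    rw [himg, Finset.card_insert_of_notMem (by simpa using hjj), Finset.card_singleton]
  · intro p hp
    rcases Finset.mem_insert.1 hp with h | h <;> simp_all

lemma dta_ne (hA : IsDTA (fun _ : Fin k => q) 1 2 A) {T T' : Finset (Fin k × ℕ)}
    (hT : IsInteraction (fun _ : Fin k => q) 2 T)
    (hT' : IsInteraction (fun _ : Fin k => q) 2 T')
    (hsub : rho A T ⊆ rho A T') : T = T' := by
  have h := hA.2 T hT {T'} (by simp) (by simpa using hT')
  have : T ∈ ({T'} : Finset _) := h.1 (by simpa [rhoSet] using hsub)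
  simpa using this

end Aux

section Aux2
variable {q k : ℕ} {A : Fin (2 * q ^ 2) → Fin k → ℕ}

lemma third_col (hk : 2 < k) (j j' : Fin k) : ∃ j'' : Fin k, j'' ≠ j ∧ j'' ≠ j' := by
  have hcard : ({j, j'} : Finset (Fin k)).card < Fintype.card (Fin k) := by
    calc ({j, j'} : Finset (Fin k)).card ≤ 2 := Finset.card_insert_le _ _ |>.trans (by simp)
    _ < k := hk
    _ = Fintype.card (Fin k) := (Fintype.card_fin k).symm
  have hpos : 0 < ({j, j'} : Finset (Fin k))ᶜ.card := by
    rw [Finset.card_compl]; omega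
  obtain ⟨j'', hj''⟩ := Finset.card_pos.1 hpos
  rw [Finset.mem_compl, Finset.mem_insert, Finset.mem_singleton] at hj''
  push_neg at hj''
  exact ⟨j'', hj''⟩

lemma cell_ge_two (hA : IsDTA (fun _ : Fin k => q) 1 2 A) (hk : 2 < k)
    {j j' : Fin k} (hjj : j ≠ j') {σ σ' : ℕ} (hσ : σ < q) (hσ' : σ' < q) :
    2 ≤ (rho A ({(j, σ), (j', σ')} : Finset (Fin k × ℕ))).card := by
  by_contra hlt
  push_neg at hlt
  obtain ⟨j'', hj''j, hj''j'⟩ := third_col hk j j'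
  interval_cases h : (rho A ({(j, σ), (j', σ')} : Finset (Fin k × ℕ))).card
  · -- empty
    have hemp : rho A ({(j, σ), (j', σ')} : Finset (Fin k × ℕ)) = ∅ :=
      Finset.card_eq_zero.1 h
    have heq := dta_ne hA (pair_interaction hjj hσ hσ')
      (pair_interaction (Ne.symm hj''j) hσ (by omega : (0:ℕ) < q))
      (by rw [hemp]; exact Finset.empty_subset _)
    have : (j', σ') ∈ ({(j, σ), (j'', 0)} : Finset (Fin k × ℕ)) := by
      rw [← heq]; simp
    simp only [Finset.mem_insert, Finset.mem_singleton, Prod.ext_iff] at this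
    rcases this with ⟨h1, _⟩ | ⟨h1, _⟩
    · exact hjj h1.symm
    · exact hj''j' h1.symm
  · -- singleton
    obtain ⟨r, hr⟩ := Finset.card_eq_one.1 h
    have hrmem : r ∈ rho A ({(j, σ), (j', σ')} : Finset (Fin k × ℕ)) := by
      rw [hr]; exact Finset.mem_singleton_self r
    rw [mem_rho] at hrmem
    have hAj : A r j = σ := hrmem (j, σ) (by simp)
    have heq := dta_ne hA (pair_interaction hjj hσ hσ')
      (pair_interaction (Ne.symm hj''j) hσ (hA.1 r j''))
      (by
        rw [hr]
        intro x hx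
        rw [Finset.mem_singleton] at hx
        subst hx
        rw [mem_rho]
        intro p hp
        rcases Finset.mem_insert.1 hp with h1 | h1
        · subst h1; exact hAj
        · rw [Finset.mem_singleton] at h1; subst h1; rfl)
    have : (j', σ') ∈ ({(j, σ), (j'', A r j'')} : Finset (Fin k × ℕ)) := by
      rw [← heq]; simp
    simp only [Finset.mem_insert, Finset.mem_singleton, Prod.ext_iff] at this
    rcases this with ⟨h1, _⟩ | ⟨h1, _⟩
    · exact hjj h1.symm
    · exact hj''j' h1.symm

end Aux2

section Aux3
variable {q k : ℕ} {A : Fin (2 * q ^ 2) → Fin k → ℕ}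

lemma sum_cells (hA1 : IsArray (fun _ : Fin k => q) A) {j j' : Fin k} (hjj : j ≠ j') :
    ∑ p ∈ Finset.range q ×ˢ Finset.range q,
      (rho A ({(j, p.1), (j', p.2)} : Finset (Fin k × ℕ))).card = 2 * q ^ 2 := by
  have hmaps : ∀ r ∈ (Finset.univ : Finset (Fin (2 * q ^ 2))),
      (A r j, A r j') ∈ Finset.range q ×ˢ Finset.range q := by
    intro r _
    simp [Finset.mem_product, hA1 r j, hA1 r j']
  have h := Finset.card_eq_sum_card_fiberwise hmaps
  rw [Finset.card_univ, Fintype.card_fin] at h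
  have hcong : ∀ p ∈ Finset.range q ×ˢ Finset.range q,
      (rho A ({(j, p.1), (j', p.2)} : Finset (Fin k × ℕ))).card =
        (Finset.univ.filter (fun a : Fin (2 * q ^ 2) => (A a j, A a j') = p)).card := by
    intro p _
    congr 1
    ext r
    simp only [rho, Finset.mem_filter, Finset.mem_univ, true_and, Prod.ext_iff]
    constructor
    · intro hr
      exact ⟨hr (j, p.1) (by simp), hr (j', p.2) (by simp)⟩
    · rintro ⟨h1, h2⟩ x hx
      rcases Finset.mem_insert.1 hx with h3 | h3
      · subst h3; exact h1
      · rw [Finset.mem_singleton] at h3; subst h3; exact h2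
  rw [Finset.sum_congr rfl hcong]
  exact h.symm

lemma cell_eq_two (hA : IsDTA (fun _ : Fin k => q) 1 2 A) (hk : 2 < k)
    {j j' : Fin k} (hjj : j ≠ j') {σ σ' : ℕ} (hσ : σ < q) (hσ' : σ' < q) :
    (rho A ({(j, σ), (j', σ')} : Finset (Fin k × ℕ))).card = 2 := by
  by_contra hne
  have hge := cell_ge_two hA hk hjj hσ hσ'
  have hgt : 2 < (rho A ({(j, σ), (j', σ')} : Finset (Fin k × ℕ))).card := by omega
  have hmem : (σ, σ') ∈ Finset.range q ×ˢ Finset.range q := by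
    simp [Finset.mem_product, hσ, hσ']
  have hlt : ∑ _p ∈ Finset.range q ×ˢ Finset.range q, 2 <
      ∑ p ∈ Finset.range q ×ˢ Finset.range q,
        (rho A ({(j, p.1), (j', p.2)} : Finset (Fin k × ℕ))).card := by
    apply Finset.sum_lt_sum
    · intro p hp
      rw [Finset.mem_product, Finset.mem_range, Finset.mem_range] at hp
      exact cell_ge_two hA hk hjj hp.1 hp.2
    · exact ⟨(σ, σ'), hmem, hgt⟩
  rw [sum_cells hA.1 hjj, Finset.sum_const, Finset.card_product, Finset.card_range,
    smul_eq_mul] at hlt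
  nlinarith [hlt]

lemma three_agree (hA : IsDTA (fun _ : Fin k => q) 1 2 A) (hk : 2 < k)
    {r r' : Fin (2 * q ^ 2)} (hrr : r ≠ r') {a b c : Fin k}
    (hab : a ≠ b) (hac : a ≠ c) (hbc : b ≠ c)
    (ha : A r a = A r' a) (hb : A r b = A r' b) (hc : A r c = A r' c) : False := by
  set T : Finset (Fin k × ℕ) := {(a, A r a), (b, A r b)} with hT
  set T' : Finset (Fin k × ℕ) := {(a, A r a), (c, A r c)} with hT'
  have hmemT : ∀ s ∈ ({r, r'} : Finset (Fin (2 * q ^ 2))), s ∈ rho A T := by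
    intro s hs
    rw [mem_rho]
    intro p hp
    rcases Finset.mem_insert.1 hp with h1 | h1
    · subst h1
      rcases Finset.mem_insert.1 hs with h2 | h2
      · subst h2; rfl
      · rw [Finset.mem_singleton] at h2; subst h2; exact ha.symm
    · rw [Finset.mem_singleton] at h1; subst h1
      rcases Finset.mem_insert.1 hs with h2 | h2
      · subst h2; rfl
      · rw [Finset.mem_singleton] at h2; subst h2; exact hb.symm
  have hmemT' : ∀ s ∈ ({r, r'} : Finset (Fin (2 * q ^ 2))), s ∈ rho A T' := by
    intro s hs
    rw [mem_rho]
    intro p hp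
    rcases Finset.mem_insert.1 hp with h1 | h1
    · subst h1
      rcases Finset.mem_insert.1 hs with h2 | h2
      · subst h2; rfl
      · rw [Finset.mem_singleton] at h2; subst h2; exact ha.symm
    · rw [Finset.mem_singleton] at h1; subst h1
      rcases Finset.mem_insert.1 hs with h2 | h2
      · subst h2; rfl
      · rw [Finset.mem_singleton] at h2; subst h2; exact hc.symm
  have hcard2 : ({r, r'} : Finset (Fin (2 * q ^ 2))).card = 2 := by
    rw [Finset.card_insert_of_notMem (by simpa using hrr), Finset.card_singleton]
  have hTeq : ({r, r'} : Finset (Fin (2 * q ^ 2))) = rho A T := by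
    apply Finset.eq_of_subset_of_card_le (fun s hs => hmemT s hs)
    rw [hcard2, cell_eq_two hA hk hab (hA.1 r a) (hA.1 r b)]
  have hsub : rho A T ⊆ rho A T' := by
    rw [← hTeq]
    exact fun s hs => hmemT' s hs
  have heq := dta_ne hA (pair_interaction hab (hA.1 r a) (hA.1 r b))
    (pair_interaction hac (hA.1 r a) (hA.1 r c)) hsub
  have : (b, A r b) ∈ ({(a, A r a), (c, A r c)} : Finset (Fin k × ℕ)) :=
    heq ▸ (by simp : (b, A r b) ∈ ({(a, A r a), (b, A r b)} : Finset (Fin k × ℕ)))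
  simp only [Finset.mem_insert, Finset.mem_singleton, Prod.ext_iff] at this
  rcases this with ⟨h1, _⟩ | ⟨h1, _⟩
  · exact hab h1.symm
  · exact hbc h1

end Aux3

/-- Lemma: if an optimum `(1,2)`-DTA(`2q²`; k, q) meeting the
lower bound exists, then `k ≤ 2q`. -/
theorem stmt_10 {q k : ℕ} (hq : 2 ≤ q) (hk : 2 < k)
    (h : ∃ A : Fin (2 * q ^ 2) → Fin k → ℕ, IsDTA (fun _ : Fin k => q) 1 2 A) :
    k ≤ 2 * q := by
  classical
  obtain ⟨A, hA⟩ := h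
  have hN : 0 < 2 * q ^ 2 := by positivity
  set r0 : Fin (2 * q ^ 2) := ⟨0, hN⟩ with hr0
  -- for each pair of distinct columns, there is another row agreeing with r0 there
  have hex : ∀ p : Fin k × Fin k, p.1 ≠ p.2 →
      ∃ r' : Fin (2 * q ^ 2), r' ≠ r0 ∧ A r' p.1 = A r0 p.1 ∧ A r' p.2 = A r0 p.2 := by
    intro p hp
    have hcell := cell_eq_two hA hk hp (hA.1 r0 p.1) (hA.1 r0 p.2)
    have h1 : (1 : ℕ) < (rho A ({(p.1, A r0 p.1), (p.2, A r0 p.2)} : Finset (Fin k × ℕ))).card := by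
      omega
    obtain ⟨r', hr'mem, hr'ne⟩ := Finset.exists_mem_ne h1 r0
    rw [mem_rho] at hr'mem
    exact ⟨r', hr'ne, hr'mem (p.1, A r0 p.1) (by simp), hr'mem (p.2, A r0 p.2) (by simp)⟩
  -- choice function
  let g : Fin k × Fin k → Fin (2 * q ^ 2) := fun p =>
    if hp : p.1 ≠ p.2 then (hex p hp).choose else r0
  have hg : ∀ p : Fin k × Fin k, ∀ hp : p.1 ≠ p.2,
      g p ≠ r0 ∧ A (g p) p.1 = A r0 p.1 ∧ A (g p) p.2 = A r0 p.2 := by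
    intro p hp
    simp only [g, dif_pos hp]
    exact (hex p hp).choose_spec
  -- if two off-diagonal pairs map to the same row, they are equal as unordered pairs
  have hkey : ∀ p p' : Fin k × Fin k, p.1 ≠ p.2 → p'.1 ≠ p'.2 → g p = g p' →
      ({p.1, p.2} : Finset (Fin k)) = {p'.1, p'.2} := by
    intro p p' hp hp' hgg
    obtain ⟨hne, h1, h2⟩ := hg p hp
    obtain ⟨_, h3, h4⟩ := hg p' hp'
    rw [hgg] at h1 h2
    set S : Finset (Fin k) := {p.1, p.2, p'.1, p'.2} with hS
    have hagree : ∀ x ∈ S, A r0 x = A (g p') x := by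
      intro x hx
      simp only [hS, Finset.mem_insert, Finset.mem_singleton] at hx
      rcases hx with rfl | rfl | rfl | rfl
      · exact h1.symm
      · exact h2.symm
      · exact h3.symm
      · exact h4.symm
    have hScard : S.card ≤ 2 := by
      by_contra hgt
      push_neg at hgt
      obtain ⟨a, ha, b, hb, c, hc, hab, hac, hbc⟩ := Finset.two_lt_card.1 hgt
      have hr0ne : r0 ≠ g p' := fun hh => hne (by rw [hgg, ← hh])
      exact three_agree hA hk hr0ne hab hac hbc
        (hagree a ha) (hagree b hb) (hagree c hc)
    have hsub1 : ({p.1, p.2} : Finset (Fin k)) ⊆ S := by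
      intro x hx
      simp only [hS, Finset.mem_insert, Finset.mem_singleton] at hx ⊢
      tauto
    have hsub2 : ({p'.1, p'.2} : Finset (Fin k)) ⊆ S := by
      intro x hx
      simp only [hS, Finset.mem_insert, Finset.mem_singleton] at hx ⊢
      tauto
    have hc1 : ({p.1, p.2} : Finset (Fin k)).card = 2 := by
      rw [Finset.card_insert_of_notMem (by simpa using hp), Finset.card_singleton]
    have hc2 : ({p'.1, p'.2} : Finset (Fin k)).card = 2 := by
      rw [Finset.card_insert_of_notMem (by simpa using hp'), Finset.card_singleton]
    rw [Finset.eq_of_subset_of_card_le hsub1 (by omega),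
      Finset.eq_of_subset_of_card_le hsub2 (by omega)]
  -- fibers of g on offDiag have at most 2 elements
  have hfiber : ∀ r' ∈ (Finset.univ.offDiag : Finset (Fin k × Fin k)).image g,
      ((Finset.univ.offDiag : Finset (Fin k × Fin k)).filter fun x => g x = r').card ≤ 2 := by
    intro r' hr'
    obtain ⟨p, hp, hgp⟩ := Finset.mem_image.1 hr'
    rw [Finset.mem_offDiag] at hp
    have hsub : ((Finset.univ.offDiag : Finset (Fin k × Fin k)).filter fun x => g x = r') ⊆
        {p, (p.2, p.1)} := by
      intro p' hp'
      rw [Finset.mem_filter, Finset.mem_offDiag] at hp'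
      have hpairs := hkey p' p hp'.1.2.2 hp.2.2 (hp'.2.trans hgp.symm)
      have e1 : p'.1 ∈ ({p.1, p.2} : Finset (Fin k)) := by
        rw [← hpairs]; simp
      have e2 : p'.2 ∈ ({p.1, p.2} : Finset (Fin k)) := by
        rw [← hpairs]; simp
      simp only [Finset.mem_insert, Finset.mem_singleton] at e1 e2
      have hne' := hp'.1.2.2
      simp only [Finset.mem_insert, Finset.mem_singleton, Prod.ext_iff]
      rcases e1 with e1 | e1 <;> rcases e2 with e2 | e2
      · exact absurd (e1.trans e2.symm) hne'
      · exact Or.inl ⟨e1, e2⟩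
      · exact Or.inr ⟨e1, e2⟩
      · exact absurd (e1.trans e2.symm) hne'
    calc ((Finset.univ.offDiag : Finset (Fin k × Fin k)).filter fun x => g x = r').card
        ≤ ({p, (p.2, p.1)} : Finset (Fin k × Fin k)).card := Finset.card_le_card hsub
      _ ≤ 2 := Finset.card_insert_le _ _ |>.trans (by simp)
  have hcount := Finset.card_le_mul_card_image (f := g)
    (Finset.univ.offDiag : Finset (Fin k × Fin k)) 2 hfiber
  -- the image avoids r0
  have himg : (Finset.univ.offDiag : Finset (Fin k × Fin k)).image g ⊆
      Finset.univ.erase r0 := by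
    intro r' hr'
    obtain ⟨p, hp, hgp⟩ := Finset.mem_image.1 hr'
    rw [Finset.mem_offDiag] at hp
    rw [Finset.mem_erase]
    exact ⟨hgp ▸ (hg p hp.2.2).1, Finset.mem_univ _⟩
  have himgcard : ((Finset.univ.offDiag : Finset (Fin k × Fin k)).image g).card ≤
      2 * q ^ 2 - 1 := by
    calc _ ≤ (Finset.univ.erase r0).card := Finset.card_le_card himg
      _ = 2 * q ^ 2 - 1 := by
        rw [Finset.card_erase_of_mem (Finset.mem_univ _), Finset.card_univ, Fintype.card_fin]
  have hoff : (Finset.univ.offDiag : Finset (Fin k × Fin k)).card = k * k - k := by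
    rw [Finset.offDiag_card, Finset.card_univ, Fintype.card_fin]
  rw [hoff] at hcount
  have hfinal : k * k - k ≤ 2 * (2 * q ^ 2 - 1) := hcount.trans (by omega)
  -- conclude
  by_contra hcon
  push_neg at hcon
  have hk' : 2 * q + 1 ≤ k := hcon
  have e1 : k ≤ k * k := Nat.le_mul_of_pos_left k (by omega)
  have e2 : 1 ≤ 2 * q ^ 2 := by nlinarith
  zify [e1, e2] at hfinal
  nlinarith [hfinal, hk', hq]
end
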